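/- arXiv:0711.0879 — 3 statements merged into one kernel-verified Lean document; each statement's English description precedes it below -/
import Mathlib

section
/- Let (x₊(t,z), ξ₊(t,z)) be a smooth family of energy-E₀ Hamiltonian trajectories of p = |ξ|²/2 + V such that ξ₊(t,z) → 0 and ∂_z x₊(t,z) → 0 as t → -∞, and x₊(0,z) = z. Then the action S₊(z) = ∫_{-∞}^{0} ( (1/2)|ξ₊(t,z)|² + E₀ - V(x₊(t,z)) ) dt satisfies ∂_z S₊(z) = ξ₊(0,z). Consequently the Lagrangian manifold {(x₊(0,z), ξ₊(0,z))} is the graph of ∇S₊. -/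
open scoped RealInnerProductSpace
open Filter MeasureTheory Function

/-!
Write `x(t, s) = x₊(t, z + s v)`. Differentiating the Lagrangian `|ξ|²/2 + E₀ - V(x)` in `s` and
using `∂ₜx = ξ`, `∂ₜξ = -∇V(x)` together with `∂ₜ∂ₛx = ∂ₛ∂ₜx = ∂ₛξ` shows that the first
variation of the Lagrangian is the exact time derivative `∂ₜ⟪ξ, ∂ₛx⟫`. Integrating over
`(-∞, 0]` leaves only the boundary term at `t = 0`, which is `⟪ξ₊(0, z), v⟫` since
`x₊(0, z + s v) = z + s v`; the term at `-∞` vanishes by the decay assumptions.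
-/

section Partial

variable {E : Type*} [NormedAddCommGroup E] [NormedSpace ℝ E]

theorem HasFDerivAt.hasDerivAt_partial_fst {F : ℝ × ℝ → E} {F' : ℝ × ℝ →L[ℝ] E} {t s : ℝ}
    (hF : HasFDerivAt F F' (t, s)) : HasDerivAt (fun t => F (t, s)) (F' (1, 0)) t :=
  hF.comp_hasDerivAt t ((hasDerivAt_id t).prodMk (hasDerivAt_const t s))

theorem HasFDerivAt.hasDerivAt_partial_snd {F : ℝ × ℝ → E} {F' : ℝ × ℝ →L[ℝ] E} {t s : ℝ}
    (hF : HasFDerivAt F F' (t, s)) : HasDerivAt (fun s => F (t, s)) (F' (0, 1)) s :=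
  hF.comp_hasDerivAt s ((hasDerivAt_const s t).prodMk (hasDerivAt_id s))

variable {f g : ℝ → ℝ → E}

theorem hasDerivAt_of_differentiable_uncurry (hf : Differentiable ℝ (uncurry f)) (t s : ℝ) :
    HasDerivAt (f t) (deriv (f t) s) s :=
  (hf (t, s)).hasFDerivAt.hasDerivAt_partial_snd.differentiableAt.hasDerivAt

theorem uncurry_eq_fderiv_apply_of_hasDerivAt_fst (hf : Differentiable ℝ (uncurry f))
    (hfg : ∀ t s, HasDerivAt (fun t => f t s) (g t s) t) :
    uncurry g = fun r => fderiv ℝ (uncurry f) r (1, 0) :=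
  funext fun r => (hfg r.1 r.2).unique (hf r).hasFDerivAt.hasDerivAt_partial_fst

theorem contDiff_uncurry_of_hasDerivAt_fst {n : WithTop ℕ∞}
    (hf : ContDiff ℝ (n + 1) (uncurry f)) (hfg : ∀ t s, HasDerivAt (fun t => f t s) (g t s) t) :
    ContDiff ℝ n (uncurry g) := by
  rw [uncurry_eq_fderiv_apply_of_hasDerivAt_fst (hf.differentiable (by simp)) hfg]
  exact (hf.fderiv_right le_rfl).clm_apply contDiff_const

/-- Symmetry of mixed partial derivatives. -/
theorem hasDerivAt_deriv_swap (hf : ContDiff ℝ 2 (uncurry f))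
    (hfg : ∀ t s, HasDerivAt (fun t => f t s) (g t s) t) (t s : ℝ) :
    HasDerivAt (fun t => deriv (f t) s) (deriv (g t) s) t := by
  set F := uncurry f
  have hF : Differentiable ℝ F := hf.differentiable (by norm_num)
  have hDF : Differentiable ℝ (fderiv ℝ F) :=
    (hf.fderiv_right (m := 1) (by norm_num)).differentiable (by norm_num)
  have hderiv_f : ∀ t, deriv (f t) s = fderiv ℝ F (t, s) (0, 1) := fun t =>
    (hF (t, s)).hasFDerivAt.hasDerivAt_partial_snd.deriv
  have hderiv_g : deriv (g t) s = fderiv ℝ (fderiv ℝ F) (t, s) (0, 1) (1, 0) := by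
    have hg : g t = fun s => fderiv ℝ F (t, s) (1, 0) := funext fun s =>
      congrFun (uncurry_eq_fderiv_apply_of_hasDerivAt_fst hF hfg) (t, s)
    rw [hg]
    simpa using ((hDF (t, s)).hasFDerivAt.hasDerivAt_partial_snd.clm_apply
      (hasDerivAt_const s ((1 : ℝ), (0 : ℝ)))).deriv
  rw [funext hderiv_f, hderiv_g,
    hf.contDiffAt.isSymmSndFDerivAt (by simp) (0, 1) (1, 0)]
  simpa using (hDF (t, s)).hasFDerivAt.hasDerivAt_partial_fst.clm_apply
    (hasDerivAt_const t ((0 : ℝ), (1 : ℝ)))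

end Partial

section Action

variable {E : Type*} [NormedAddCommGroup E] [InnerProductSpace ℝ E] [CompleteSpace E]
  {V : E → ℝ}

theorem hasDerivAt_lagrangian (E₀ : ℝ) {x ξ : ℝ → E} {x' ξ' : E} {s : ℝ}
    (hV : DifferentiableAt ℝ V (x s)) (hx : HasDerivAt x x' s) (hξ : HasDerivAt ξ ξ' s) :
    HasDerivAt (fun s => ‖ξ s‖ ^ 2 / 2 + E₀ - V (x s))
      (⟪ξ s, ξ'⟫ - ⟪gradient V (x s), x'⟫) s := by
  have hkin : HasDerivAt (fun s => ‖ξ s‖ ^ 2 / 2) ⟪ξ s, ξ'⟫ s :=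
    (hξ.norm_sq.div_const 2).congr_deriv (by ring)
  have hpot : HasDerivAt (fun s => V (x s)) ⟪gradient V (x s), x'⟫ s :=
    hV.hasGradientAt.hasFDerivAt.comp_hasDerivAt s hx
  exact (hkin.add_const E₀).sub hpot

theorem hasDerivAt_inner_momentum_variation (E₀ : ℝ) (hV : Differentiable ℝ V)
    {x ξ : ℝ → ℝ → E} (hx : ContDiff ℝ 2 (uncurry x))
    (hxt : ∀ t s, HasDerivAt (fun t => x t s) (ξ t s) t)
    (hξt : ∀ t s, HasDerivAt (fun t => ξ t s) (-gradient V (x t s)) t) (t s : ℝ) :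
    HasDerivAt (fun t => ⟪ξ t s, deriv (x t) s⟫)
      (deriv (fun s => ‖ξ t s‖ ^ 2 / 2 + E₀ - V (x t s)) s) t := by
  have hξ : ContDiff ℝ 1 (uncurry ξ) := contDiff_uncurry_of_hasDerivAt_fst hx hxt
  have hxs := hasDerivAt_of_differentiable_uncurry (hx.differentiable (by norm_num)) t s
  have hξs := hasDerivAt_of_differentiable_uncurry (hξ.differentiable one_ne_zero) t s
  rw [(hasDerivAt_lagrangian E₀ (hV _) hxs hξs).deriv]
  simpa [inner_neg_left, sub_eq_add_neg] using
    (hξt t s).inner ℝ (hasDerivAt_deriv_swap hx hxt t s)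

end Action

theorem gradient_of_action_is_momentum_general {n : ℕ}
    (V : EuclideanSpace ℝ (Fin n) → ℝ) (hV : ContDiff ℝ (⊤ : ℕ∞) V)
    (E₀ : ℝ)
    (x ξ : ℝ → EuclideanSpace ℝ (Fin n) → EuclideanSpace ℝ (Fin n))
    (hsm : ContDiff ℝ (⊤ : ℕ∞)
      (fun q : ℝ × EuclideanSpace ℝ (Fin n) => (x q.1 q.2, ξ q.1 q.2)))
    (hx : ∀ t z, HasDerivAt (fun t' => x t' z) (ξ t z) t)
    (hξ : ∀ t z, HasDerivAt (fun t' => ξ t' z) (-(gradient V (x t z))) t)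
    (hx0 : ∀ z, x 0 z = z)
    (S : EuclideanSpace ℝ (Fin n) → ℝ)
    (z : EuclideanSpace ℝ (Fin n))
    (hdecay1 : Tendsto (fun t => ξ t z) atBot (nhds 0))
    (hdecay2 : ∀ v : EuclideanSpace ℝ (Fin n),
      Tendsto (fun t => deriv (fun s : ℝ => x t (z + s • v)) 0) atBot (nhds 0))
    (hint : ∀ v : EuclideanSpace ℝ (Fin n),
      IntegrableOn (fun t =>
        deriv (fun s : ℝ => ‖ξ t (z + s • v)‖ ^ 2 / 2 + E₀ - V (x t (z + s • v))) 0)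
        (Set.Iic (0 : ℝ)))
    (hDUI : ∀ v : EuclideanSpace ℝ (Fin n),
      HasDerivAt (fun s : ℝ => S (z + s • v))
        (∫ t in Set.Iic (0 : ℝ),
          deriv (fun s : ℝ => ‖ξ t (z + s • v)‖ ^ 2 / 2 + E₀ - V (x t (z + s • v))) 0) 0) :
    ∀ v : EuclideanSpace ℝ (Fin n),
      HasDerivAt (fun s : ℝ => S (z + s • v)) ⟪ξ 0 z, v⟫ 0 := by
  intro v
  have hline : ContDiff ℝ (⊤ : ℕ∞) fun r : ℝ × ℝ => (r.1, z + r.2 • v) :=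
    contDiff_fst.prodMk (contDiff_const.add (contDiff_snd.smul contDiff_const))
  have hvar := hasDerivAt_inner_momentum_variation E₀ (hV.differentiable (by simp))
    (x := fun t s => x t (z + s • v)) (ξ := fun t s => ξ t (z + s • v))
    ((hsm.fst.comp hline).of_le (WithTop.coe_le_coe.mpr le_top))
    (fun t s => hx t _) (fun t s => hξ t _)
  have hboundary : Tendsto (fun t => ⟪ξ t (z + (0 : ℝ) • v),
      deriv (fun s : ℝ => x t (z + s • v)) 0⟫) atBot (nhds 0) := by
    simpa using hdecay1.inner (𝕜 := ℝ) (hdecay2 v)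
  have hftc := integral_Iic_of_hasDerivAt_of_tendsto (hvar 0 0).continuousAt.continuousWithinAt
    (fun t _ => hvar t 0) (hint v) hboundary
  have hx0_deriv : deriv (fun s : ℝ => x 0 (z + s • v)) 0 = v := by
    simp only [hx0]
    exact (((hasDerivAt_id (0 : ℝ)).smul_const v).const_add z).deriv.trans (one_smul ℝ v)
  simpa [hftc, hx0_deriv] using hDUI v

/-- For a family of energy-E₀ Hamiltonian trajectories with x₊(0,z) = z, ξ₊(t,z) → 0 and
∂_z x₊(t,z) → 0 as t → -∞, the action S₊(z) = ∫_{-∞}^0 ((1/2)|ξ₊|² + E₀ - V(x₊)) dt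
satisfies ∇S₊(z) = ξ₊(0,z): the directional derivative of S₊ in direction v is ⟨ξ₊(0,z), v⟩. -/
theorem gradient_of_action_is_momentum {n : ℕ}
    (V : EuclideanSpace ℝ (Fin n) → ℝ) (hV : ContDiff ℝ (⊤ : ℕ∞) V)
    (E₀ : ℝ)
    (x ξ : ℝ → EuclideanSpace ℝ (Fin n) → EuclideanSpace ℝ (Fin n))
    (hsm : ContDiff ℝ (⊤ : ℕ∞)
      (fun q : ℝ × EuclideanSpace ℝ (Fin n) => (x q.1 q.2, ξ q.1 q.2)))
    (hx : ∀ t z, HasDerivAt (fun t' => x t' z) (ξ t z) t)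
    (hξ : ∀ t z, HasDerivAt (fun t' => ξ t' z) (-(gradient V (x t z))) t)
    (hE : ∀ t z, ‖ξ t z‖ ^ 2 / 2 + V (x t z) = E₀)
    (hx0 : ∀ z, x 0 z = z)
    (S : EuclideanSpace ℝ (Fin n) → ℝ)
    (hS : ∀ z, S z = ∫ t in Set.Iic (0 : ℝ), (‖ξ t z‖ ^ 2 / 2 + E₀ - V (x t z)))
    (z : EuclideanSpace ℝ (Fin n))
    (hdecay1 : Tendsto (fun t => ξ t z) atBot (nhds 0))
    (hdecay2 : ∀ v : EuclideanSpace ℝ (Fin n),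
      Tendsto (fun t => deriv (fun s : ℝ => x t (z + s • v)) 0) atBot (nhds 0))
    (hint : ∀ v : EuclideanSpace ℝ (Fin n),
      IntegrableOn (fun t =>
        deriv (fun s : ℝ => ‖ξ t (z + s • v)‖ ^ 2 / 2 + E₀ - V (x t (z + s • v))) 0)
        (Set.Iic (0 : ℝ)))
    (hDUI : ∀ v : EuclideanSpace ℝ (Fin n),
      HasDerivAt (fun s : ℝ => S (z + s • v))
        (∫ t in Set.Iic (0 : ℝ),
          deriv (fun s : ℝ => ‖ξ t (z + s • v)‖ ^ 2 / 2 + E₀ - V (x t (z + s • v))) 0) 0) :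
    ∀ v : EuclideanSpace ℝ (Fin n),
      HasDerivAt (fun s : ℝ => S (z + s • v)) ⟪ξ 0 z, v⟫ 0 :=
  gradient_of_action_is_momentum_general V hV E₀ x ξ hsm hx hξ hx0 S z hdecay1 hdecay2 hint hDUI
end

section
/- Let Φ : ℝ × ℝⁿ → ℝ be smooth with Φ'_t + p(x, Φ'_x) = 0 (eikonal equation for p(x,ξ) = |ξ|²/2 + V(x)) and suppose exp(tH_p)(Φ'_θ(t,x,θ), θ) = (x, Φ'_x(t,x,θ)) for a smooth family. If at a point one has Φ''_{t,t} = 0, Φ''_{t,θ} = 0 and Φ''_{t,x} = 0 (the full first row of the mixed Hessian of ∂_tΦ vanishes), then H_p(y,θ) = 0 where y = Φ'_θ, i.e. (y,θ) is a critical point of p. -/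
/-!
Differentiate the flow relation in `t` at `t₀`. By symmetry of second derivatives, the vanishing of
`d(∂ₜΦ)` makes `∂_θΦ(t, x₀, θ₀)` and `∂ₓΦ(t, x₀, θ₀)` stationary at `t₀`; so the curve of initial
data `ρ(t) = (∂_θΦ, θ₀)` and its image `exp(tH_p) ρ(t) = (x₀, ∂ₓΦ)` are both stationary at `t₀`.
As the flow depends Lipschitz-continuously on the initial data (Gronwall), the image curve has
velocity `H_p(exp(t₀H_p) ρ(t₀))` there, which must therefore vanish. A zero of `H_p` is an
equilibrium, so by uniqueness of integral curves it is `ρ(t₀)` itself.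
-/

open Set Metric Filter Topology Asymptotics
open scoped NNReal

section MixedPartials

variable {E F : Type*} [NormedAddCommGroup E] [NormedSpace ℝ E]
  [NormedAddCommGroup F] [NormedSpace ℝ F]

theorem hasDerivAt_fderiv_section {g : ℝ × E → F} (hg : ContDiff ℝ 2 g) (t₀ : ℝ) (a₀ : E) :
    HasDerivAt (fun t => fderiv ℝ (fun a => g (t, a)) a₀)
      ((fderiv ℝ (fun q : ℝ × E => deriv (fun t => g (t, q.2)) q.1) (t₀, a₀)).comp
        (ContinuousLinearMap.inr ℝ ℝ E)) t₀ := by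
  have hdiff : Differentiable ℝ g := hg.differentiable (by norm_num)
  have hline : ∀ q : ℝ × E, HasDerivAt (fun t => ((t, q.2) : ℝ × E)) (1, 0) q.1 := fun q =>
    (hasDerivAt_id _).prodMk (hasDerivAt_const _ _)
  set D := fderiv ℝ (fderiv ℝ g) (t₀, a₀)
  have hD : HasFDerivAt (fderiv ℝ g) D (t₀, a₀) :=
    ((hg.fderiv_right (m := 1) le_rfl).differentiable one_ne_zero _).hasFDerivAt
  have hsection : ∀ t, fderiv ℝ (fun a => g (t, a)) a₀ =
      (fderiv ℝ g (t, a₀)).comp (ContinuousLinearMap.inr ℝ ℝ E) := fun t =>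
    ((hdiff _).hasFDerivAt.comp a₀ (hasFDerivAt_prodMk_right t a₀)).fderiv
  have hpartial : (fun q : ℝ × E => deriv (fun t => g (t, q.2)) q.1) =
      fun q => fderiv ℝ g q (1, 0) :=
    funext fun q => ((hdiff _).hasFDerivAt.comp_hasDerivAt q.1 (hline q)).deriv
  have hpartial' : fderiv ℝ (fun q => fderiv ℝ g q (1, 0)) (t₀, a₀) =
      (ContinuousLinearMap.apply ℝ F ((1 : ℝ), (0 : E))).comp D :=
    ((ContinuousLinearMap.apply ℝ F ((1 : ℝ), (0 : E))).hasFDerivAt.comp _ hD).fderiv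
  have hcurve : HasDerivAt (fun t => fderiv ℝ g (t, a₀)) (D (1, 0)) t₀ :=
    hD.comp_hasDerivAt t₀ (hline (t₀, a₀))
  rw [funext hsection, hpartial, hpartial']
  convert hcurve.clm_comp (hasDerivAt_const t₀ (ContinuousLinearMap.inr ℝ ℝ E)) using 1
  ext v
  simpa using (hg.contDiffAt.isSymmSndFDerivAt (by simp)).eq (0, v) (1, 0)

end MixedPartials

section Gradient

variable {E G : Type*} [NormedAddCommGroup E] [InnerProductSpace ℝ E] [CompleteSpace E]
  [NormedAddCommGroup G] [NormedSpace ℝ G]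

theorem hasDerivAt_gradient_comp {f : ℝ → G → ℝ} {ι : E → G} {J : E →L[ℝ] G} {a₀ : E}
    {t₀ : ℝ} {L' : G →L[ℝ] ℝ} (hι : HasFDerivAt ι J a₀)
    (hf : ∀ t, DifferentiableAt ℝ (f t) (ι a₀))
    (hL : HasDerivAt (fun t => fderiv ℝ (f t) (ι a₀)) L' t₀) :
    HasDerivAt (fun t => gradient (fun a => f t (ι a)) a₀)
      ((InnerProductSpace.toDual ℝ E).symm (L'.comp J)) t₀ := by
  have hsection : ∀ t, gradient (fun a => f t (ι a)) a₀ =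
      (InnerProductSpace.toDual ℝ E).symm ((fderiv ℝ (f t) (ι a₀)).comp J) := fun t =>
    congrArg _ ((hf t).hasFDerivAt.comp a₀ hι).fderiv
  rw [funext hsection]
  have h := (InnerProductSpace.toDual ℝ E).symm.toContinuousLinearEquiv.hasFDerivAt.comp_hasDerivAt
    t₀ (hL.clm_comp (hasDerivAt_const t₀ J))
  rw [ContinuousLinearMap.comp_zero, add_zero] at h
  exact h

end Gradient

section IntegralCurves

variable {G : Type*} [NormedAddCommGroup G] [NormedSpace ℝ G] {w : G → G} {γ γ₀ : ℝ → G}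

theorem IsIntegralCurve.comp_neg (hγ : IsIntegralCurve γ (fun _ => w)) :
    IsIntegralCurve (fun t => γ (-t)) (fun _ => -w) := fun t => by
  simpa [Function.comp_def] using (hγ (-t)).scomp t (hasDerivAt_neg t)

theorem IsIntegralCurve.dist_le_mul_exp {a b R : ℝ} {K : ℝ≥0}
    (hK : LipschitzOnWith K w (closedBall 0 (R + 1)))
    (hγ : IsIntegralCurve γ (fun _ => w)) (hγ₀ : IsIntegralCurve γ₀ (fun _ => w))
    (hR : ∀ t ∈ Icc a b, ‖γ₀ t‖ ≤ R) (hδ : dist (γ a) (γ₀ a) * Real.exp (K * (b - a)) < 1) :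
    ∀ t ∈ Icc a b, dist (γ t) (γ₀ t) ≤ dist (γ a) (γ₀ a) * Real.exp (K * (t - a)) := by
  set δ := dist (γ a) (γ₀ a)
  set S := {t | dist (γ t) (γ₀ t) ≤ δ * Real.exp (K * (t - a))}
  have hS : IsClosed S := isClosed_le (hγ.continuous.dist hγ₀.continuous) (by fun_prop)
  -- `w` is only Lipschitz on the ball, so Gronwall is applied on short steps (continuous
  -- induction); the smallness of `δ` keeps `γ` inside the ball at the start of each step.
  refine (hS.inter isClosed_Icc).Icc_subset_of_forall_mem_nhdsWithin (show a ∈ S by simp [S, δ]) ?_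
  rintro x ⟨hxS, hax, hxb⟩
  have hδ₀ : 0 ≤ δ := dist_nonneg
  have hx : ‖γ x‖ < R + 1 := calc
    ‖γ x‖ ≤ ‖γ₀ x‖ + dist (γ x) (γ₀ x) := dist_eq_norm (γ x) (γ₀ x) ▸ norm_le_insert' _ _
    _ < R + 1 := by
      have : δ * Real.exp (K * (x - a)) ≤ δ * Real.exp (K * (b - a)) := by gcongr
      linarith [hR x ⟨hax, hxb.le⟩, show dist (γ x) (γ₀ x) ≤ _ from hxS]
  obtain ⟨ε, hε, hball⟩ :=
    Metric.eventually_nhds_iff.1 ((hγ.continuous.norm.tendsto x).eventually_lt_const hx)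
  refine mem_nhdsGT_iff_exists_Ioo_subset.2 ⟨min (x + ε) b, lt_min (by linarith) hxb, ?_⟩
  rintro u ⟨hxu, hub⟩
  have hu : u < x + ε ∧ u < b := lt_min_iff.1 hub
  have hgron := dist_le_of_trajectories_ODE_of_mem (v := fun _ => w)
    (s := fun _ => closedBall 0 (R + 1)) (fun _ _ => hK) hγ.continuous.continuousOn
    (fun t _ => (hγ t).hasDerivWithinAt)
    (fun t ht => mem_closedBall_zero_iff.2 (hball (by
      rw [Real.dist_eq, abs_of_nonneg (by linarith [ht.1])]; linarith [ht.2])).le)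
    hγ₀.continuous.continuousOn (fun t _ => (hγ₀ t).hasDerivWithinAt)
    (fun t ht => mem_closedBall_zero_iff.2
      ((hR t ⟨hax.trans ht.1, by linarith [ht.2]⟩).trans (by linarith)))
    hxS u ⟨hxu.le, le_rfl⟩
  calc dist (γ u) (γ₀ u) ≤ _ := hgron
    _ = δ * Real.exp (K * (u - a)) := by rw [mul_assoc, ← Real.exp_add]; ring_nf

theorem IsIntegralCurve.dist_le_exp_mul_dist {T R : ℝ} {K : ℝ≥0}
    (hK : LipschitzOnWith K w (closedBall 0 (R + 1)))
    (hγ : IsIntegralCurve γ (fun _ => w)) (hγ₀ : IsIntegralCurve γ₀ (fun _ => w))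
    (hR : ∀ t ∈ Icc 0 T, ‖γ₀ t‖ ≤ R) (h0 : dist (γ 0) (γ₀ 0) < Real.exp (-(K * T))) :
    ∀ t ∈ Icc 0 T, dist (γ t) (γ₀ t) ≤ Real.exp (K * T) * dist (γ 0) (γ₀ 0) := by
  have hsmall : dist (γ 0) (γ₀ 0) * Real.exp (K * (T - 0)) < 1 := by
    calc dist (γ 0) (γ₀ 0) * Real.exp (K * (T - 0))
        < Real.exp (-(K * T)) * Real.exp (K * T) := by
          rw [sub_zero]; exact mul_lt_mul_of_pos_right h0 (Real.exp_pos _)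
      _ = 1 := by rw [← Real.exp_add, neg_add_cancel, Real.exp_zero]
  intro t ht
  calc dist (γ t) (γ₀ t) ≤ dist (γ 0) (γ₀ 0) * Real.exp (K * (t - 0)) :=
        hγ.dist_le_mul_exp hK hγ₀ hR hsmall t ht
    _ ≤ dist (γ 0) (γ₀ 0) * Real.exp (K * T) := by rw [sub_zero]; gcongr; exact ht.2
    _ = _ := mul_comm _ _

theorem eventually_dist_flow_le [ProperSpace G] (hw : LocallyLipschitz w) {flow : ℝ → G → G}
    (h0 : ∀ ρ, flow 0 ρ = ρ) (hflow : ∀ ρ, IsIntegralCurve (flow · ρ) (fun _ => w))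
    (t₀ : ℝ) (ρ₀ : G) :
    ∃ C : ℝ, ∀ᶠ p in 𝓝 (t₀, ρ₀), dist (flow p.1 p.2) (flow p.1 ρ₀) ≤ C * dist p.2 ρ₀ := by
  set T := |t₀| + 1
  have hT : 0 ≤ T := by positivity
  obtain ⟨R, hR⟩ := (isCompact_Icc (a := -T) (b := T)).exists_bound_of_continuousOn
    (hflow ρ₀).continuous.continuousOn
  obtain ⟨K, hK⟩ := hw.locallyLipschitzOn.exists_lipschitzOnWith_of_compact
    (isCompact_closedBall (0 : G) (R + 1))
  refine ⟨Real.exp (K * T), ?_⟩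
  have hnhds : Ioo (-T) T ×ˢ ball ρ₀ (Real.exp (-(K * T))) ∈ 𝓝 (t₀, ρ₀) :=
    prod_mem_nhds (Ioo_mem_nhds (by linarith [neg_abs_le t₀]) (by linarith [le_abs_self t₀]))
      (ball_mem_nhds _ (Real.exp_pos _))
  filter_upwards [hnhds] with ⟨t, ρ⟩ ⟨ht, hρ⟩
  rw [mem_ball] at hρ
  rcases le_total 0 t with h | h
  · simpa [h0] using (hflow ρ).dist_le_exp_mul_dist hK (hflow ρ₀)
      (fun s hs => hR s ⟨by linarith [hs.1, hT], hs.2⟩) (by simpa [h0] using hρ) t ⟨h, ht.2.le⟩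
  · simpa [h0] using (hflow ρ).comp_neg.dist_le_exp_mul_dist hK.neg (hflow ρ₀).comp_neg
      (fun s hs => hR (-s) ⟨by linarith [hs.2], by linarith [hs.1, hT]⟩) (by simpa [h0] using hρ)
      (-t) ⟨by linarith, by linarith [ht.1]⟩

theorem hasDerivAt_flow_comp_of_hasDerivAt_zero [ProperSpace G] (hw : LocallyLipschitz w)
    {flow : ℝ → G → G} (h0 : ∀ ρ, flow 0 ρ = ρ)
    (hflow : ∀ ρ, IsIntegralCurve (flow · ρ) (fun _ => w)) {ρ : ℝ → G} {t₀ : ℝ}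
    (hρ : HasDerivAt ρ 0 t₀) :
    HasDerivAt (fun t => flow t (ρ t)) (w (flow t₀ (ρ t₀))) t₀ := by
  obtain ⟨C, hC⟩ := eventually_dist_flow_le hw h0 hflow t₀ (ρ t₀)
  have hclose : (fun t => flow t (ρ t) - flow t (ρ t₀)) =O[𝓝 t₀] (fun t => ρ t - ρ t₀) :=
    IsBigO.of_bound C <| by
      filter_upwards [(continuousAt_id.prodMk hρ.continuousAt).tendsto.eventually hC] with t ht
      simpa [dist_eq_norm] using ht
  have hρ' : (fun t => ρ t - ρ t₀) =o[𝓝 t₀] (fun t => t - t₀) := by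
    simpa using hasDerivAt_iff_isLittleO.1 hρ
  have hdiff : HasDerivAt (fun t => flow t (ρ t) - flow t (ρ t₀)) 0 t₀ :=
    hasDerivAt_iff_isLittleO.2 (by simpa using hclose.trans_isLittleO hρ')
  convert (hflow (ρ t₀) t₀).add hdiff using 1
  · ext t
    simp
  · simp

theorem IsIntegralCurve.eq_of_locallyLipschitz {γ' : ℝ → G} {t₀ : ℝ} (hw : LocallyLipschitz w)
    (hγ : IsIntegralCurve γ (fun _ => w)) (hγ' : IsIntegralCurve γ' (fun _ => w))
    (h : γ t₀ = γ' t₀) : γ = γ' := by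
  funext t
  set a := min t t₀ - 1
  set b := max t t₀ + 1
  set S := γ '' Icc a b ∪ γ' '' Icc a b
  have hS : IsCompact S :=
    (isCompact_Icc.image hγ.continuous).union (isCompact_Icc.image hγ'.continuous)
  obtain ⟨K, hK⟩ := hw.locallyLipschitzOn.exists_lipschitzOnWith_of_compact hS
  have ht : t ∈ Ioo a b := ⟨by linarith [min_le_left t t₀], by linarith [le_max_left t t₀]⟩
  have ht₀ : t₀ ∈ Ioo a b := ⟨by linarith [min_le_right t t₀], by linarith [le_max_right t t₀]⟩
  exact ODE_solution_unique_of_mem_Ioo (s := fun _ => S) (fun _ _ => hK) ht₀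
    (fun s hs => ⟨hγ s, Or.inl (mem_image_of_mem _ (Ioo_subset_Icc_self hs))⟩)
    (fun s hs => ⟨hγ' s, Or.inr (mem_image_of_mem _ (Ioo_subset_Icc_self hs))⟩) h ht

end IntegralCurves

section Hamiltonian

variable {E : Type*} [NormedAddCommGroup E] [InnerProductSpace ℝ E] [CompleteSpace E]

noncomputable def hamiltonianVectorField (V : E → ℝ) (ρ : E × E) : E × E := (ρ.2, -gradient V ρ.1)

theorem ContDiff.locallyLipschitz_hamiltonianVectorField {V : E → ℝ} (hV : ContDiff ℝ 2 V) :
    LocallyLipschitz (hamiltonianVectorField V) := by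
  have hgrad : ContDiff ℝ 1 (gradient V) :=
    (InnerProductSpace.toDual ℝ E).symm.contDiff.comp (hV.fderiv_right le_rfl)
  exact (contDiff_snd.prodMk (hgrad.comp contDiff_fst).neg).locallyLipschitz

end Hamiltonian

theorem vanishing_row_gives_critical_point_general {n : ℕ}
    (V : EuclideanSpace ℝ (Fin n) → ℝ) (hV : ContDiff ℝ (⊤ : ℕ∞) V)
    (flow : ℝ → EuclideanSpace ℝ (Fin n) × EuclideanSpace ℝ (Fin n) →
      EuclideanSpace ℝ (Fin n) × EuclideanSpace ℝ (Fin n))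
    (hflow0 : ∀ ρ, flow 0 ρ = ρ)
    (hflowD : ∀ t ρ, HasDerivAt (fun s => flow s ρ)
      ((flow t ρ).2, -(gradient V (flow t ρ).1)) t)
    (Φ : ℝ → EuclideanSpace ℝ (Fin n) → EuclideanSpace ℝ (Fin n) → ℝ)
    (hΦ : ContDiff ℝ (⊤ : ℕ∞)
      (fun q : ℝ × EuclideanSpace ℝ (Fin n) × EuclideanSpace ℝ (Fin n) =>
        Φ q.1 q.2.1 q.2.2))
    (hrel : ∀ t x θ, (x, gradient (fun x' => Φ t x' θ) x)
      = flow t (gradient (fun θ' => Φ t x θ') θ, θ))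
    (t₀ : ℝ) (x₀ θ₀ : EuclideanSpace ℝ (Fin n))
    (hcrit : fderiv ℝ
      (fun q : ℝ × EuclideanSpace ℝ (Fin n) × EuclideanSpace ℝ (Fin n) =>
        deriv (fun t' => Φ t' q.2.1 q.2.2) q.1) (t₀, x₀, θ₀) = 0) :
    θ₀ = 0 ∧ gradient V (gradient (fun θ' => Φ t₀ x₀ θ') θ₀) = 0 := by
  have hH := ContDiff.locallyLipschitz_hamiltonianVectorField (hV.of_le (by norm_cast))
  have hflow : ∀ ρ, IsIntegralCurve (flow · ρ) (fun _ => hamiltonianVectorField V) :=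
    fun ρ t => hflowD t ρ
  have hΦ2 : ContDiff ℝ 2 (fun q : ℝ × _ × _ => Φ q.1 q.2.1 q.2.2) := hΦ.of_le (by norm_cast)
  have hL : HasDerivAt (fun t => fderiv ℝ (fun p => Φ t p.1 p.2) (x₀, θ₀)) 0 t₀ := by
    simpa [hcrit] using hasDerivAt_fderiv_section hΦ2 t₀ (x₀, θ₀)
  have hdiff : ∀ t, DifferentiableAt ℝ (fun p => Φ t p.1 p.2) (x₀, θ₀) := fun t =>
    (hΦ2.differentiable two_ne_zero _).comp (x₀, θ₀)
      ((differentiableAt_const t).prodMk differentiableAt_id)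
  set ρ := fun t => (gradient (fun θ => Φ t x₀ θ) θ₀, θ₀)
  have hρ : HasDerivAt ρ 0 t₀ := by
    simpa [ρ, Prod.mk_zero_zero] using
      (hasDerivAt_gradient_comp (hasFDerivAt_prodMk_right x₀ θ₀) hdiff hL).prodMk
        (hasDerivAt_const t₀ θ₀)
  have hcurve : HasDerivAt (fun t => flow t (ρ t)) 0 t₀ := by
    simp_rw [ρ, ← hrel]
    simpa [Prod.mk_zero_zero] using (hasDerivAt_const t₀ x₀).prodMk
      (hasDerivAt_gradient_comp (hasFDerivAt_prodMk_left x₀ θ₀) hdiff hL)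
  have hzero : hamiltonianVectorField V (flow t₀ (ρ t₀)) = 0 :=
    (hasDerivAt_flow_comp_of_hasDerivAt_zero hH hflow0 hflow hρ).unique hcurve
  have hfix : flow t₀ (ρ t₀) = ρ t₀ := by
    have hconst := (hflow (ρ t₀)).eq_of_locallyLipschitz hH
      (isIntegralCurve_const fun _ => hzero) (t₀ := t₀) rfl
    simpa [hflow0] using (congrFun hconst 0).symm
  rw [hfix] at hzero
  simpa [hamiltonianVectorField, ρ] using hzero

/-- If Φ solves the eikonal equation ∂ₜΦ + p(x,∂ₓΦ) = 0 with the flow relation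
(x, ∂ₓΦ) = exp(tH_p)(∂_θΦ, θ), and at a point the full differential of ∂ₜΦ vanishes,
then H_p(y, θ) = 0 where y = ∂_θΦ, i.e. (y,θ) is a critical point of p. -/
theorem vanishing_row_gives_critical_point {n : ℕ}
    (V : EuclideanSpace ℝ (Fin n) → ℝ) (hV : ContDiff ℝ (⊤ : ℕ∞) V)
    (flow : ℝ → EuclideanSpace ℝ (Fin n) × EuclideanSpace ℝ (Fin n) →
      EuclideanSpace ℝ (Fin n) × EuclideanSpace ℝ (Fin n))
    (hflow0 : ∀ ρ, flow 0 ρ = ρ)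
    (hflowD : ∀ t ρ, HasDerivAt (fun s => flow s ρ)
      ((flow t ρ).2, -(gradient V (flow t ρ).1)) t)
    (Φ : ℝ → EuclideanSpace ℝ (Fin n) → EuclideanSpace ℝ (Fin n) → ℝ)
    (hΦ : ContDiff ℝ (⊤ : ℕ∞)
      (fun q : ℝ × EuclideanSpace ℝ (Fin n) × EuclideanSpace ℝ (Fin n) =>
        Φ q.1 q.2.1 q.2.2))
    (heik : ∀ t x θ, deriv (fun t' => Φ t' x θ) t
      + (‖gradient (fun x' => Φ t x' θ) x‖ ^ 2 / 2 + V x) = 0)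
    (hrel : ∀ t x θ, (x, gradient (fun x' => Φ t x' θ) x)
      = flow t (gradient (fun θ' => Φ t x θ') θ, θ))
    (t₀ : ℝ) (x₀ θ₀ : EuclideanSpace ℝ (Fin n))
    (hcrit : fderiv ℝ
      (fun q : ℝ × EuclideanSpace ℝ (Fin n) × EuclideanSpace ℝ (Fin n) =>
        deriv (fun t' => Φ t' q.2.1 q.2.2) q.1) (t₀, x₀, θ₀) = 0) :
    θ₀ = 0 ∧ gradient V (gradient (fun θ' => Φ t₀ x₀ θ') θ₀) = 0 :=
  vanishing_row_gives_critical_point_general V hV flow hflow0 hflowD Φ hΦ hrel t₀ x₀ θ₀ hcrit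
end

section
/- Let (x(t),ξ(t)) be a Hamiltonian trajectory of p = |ξ|²/2 + V with V short-range (|∂^αV(x)| ≤ C⟨x⟩^{-ρ-|α|}, ρ > 1) such that |x(t)| → ∞ as t → +∞ and energy E > 0. Then there exist ξ_∞ ∈ ℝⁿ with |ξ_∞|² = 2E and x_∞ ∈ ℝⁿ such that |x(t) - tξ_∞ - x_∞| → 0 and |ξ(t) - ξ_∞| → 0 as t → +∞. -/
/-!
Along the trajectory, energy conservation and the decay of `V` give the virial limit
`d/dt ⟪x, ξ⟫ = ‖ξ‖² - ⟪x, ∇V(x)⟫ → 2E > 0`, so `‖x(t)‖²` grows quadratically and `‖x(t)‖ ≥ c t`.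
Hence `‖ξ'(t)‖ = ‖∇V(x(t))‖ = O(t^{-ρ-1})`, which is integrable at infinity: `ξ(t)` converges to
some `ξ∞` with `‖ξ(t) - ξ∞‖ = O(t^{-ρ})`. As `ρ > 1` this bound on the derivative of
`x(t) - t ξ∞` is integrable too, so `x(t) - t ξ∞` converges as well.
-/

open Filter Set
open scoped RealInnerProductSpace Topology

theorem exists_eventually_add_le_of_deriv_le {f g f' g' : ℝ → ℝ}
    (hf : ∀ t, HasDerivAt f (f' t) t) (hg : ∀ t, HasDerivAt g (g' t) t)
    (h : ∀ᶠ t in atTop, g' t ≤ f' t) : ∃ a, ∀ᶠ t in atTop, g t + a ≤ f t := by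
  obtain ⟨T, hT⟩ := eventually_atTop.1 h
  have hmono : MonotoneOn (fun t => f t - g t) (Ici T) := by
    refine monotoneOn_of_hasDerivWithinAt_nonneg (convex_Ici T)
      (fun t _ => ((hf t).continuousAt.sub (hg t).continuousAt).continuousWithinAt)
      (fun t _ => ((hf t).sub (hg t)).hasDerivWithinAt) fun t ht => ?_
    rw [interior_Ici] at ht
    exact sub_nonneg.2 (hT t (le_of_lt ht))
  refine ⟨f T - g T, eventually_atTop.2 ⟨T, fun t ht => ?_⟩⟩
  have := hmono self_mem_Ici ht ht
  simp only at this
  linarith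

section Decay

variable {E : Type*} [NormedAddCommGroup E] [NormedSpace ℝ E]

theorem norm_sub_le_of_norm_deriv_le_rpow {f f' : ℝ → E} {K σ s t : ℝ} (hσ : σ ≠ 0)
    (hs : 0 < s) (hst : s ≤ t) (hf : ∀ u ∈ Icc s t, HasDerivAt f (f' u) u)
    (hbound : ∀ u ∈ Icc s t, ‖f' u‖ ≤ K * u ^ (-σ - 1)) :
    ‖f t - f s‖ ≤ K / σ * (s ^ (-σ) - t ^ (-σ)) := by
  have hB : ∀ u ∈ Icc s t,
      HasDerivAt (fun u => K / σ * (s ^ (-σ) - u ^ (-σ))) (K * u ^ (-σ - 1)) u := by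
    intro u hu
    have hu : u ≠ 0 := (hs.trans_le hu.1).ne'
    have := ((Real.hasDerivAt_rpow_const (p := -σ) (Or.inl hu)).const_sub (s ^ (-σ))).const_mul
      (K / σ)
    rwa [show K / σ * -(-σ * u ^ (-σ - 1)) = K * u ^ (-σ - 1) by field_simp] at this
  refine image_norm_le_of_norm_deriv_right_le_deriv_boundary' (f := fun u => f u - f s)
    (fun u hu => ((hf u hu).continuousAt.sub continuousAt_const).continuousWithinAt)
    (fun u hu => ((hf u (Ico_subset_Icc_self hu)).sub_const (f s)).hasDerivWithinAt)
    (by simp) (fun u hu => (hB u hu).continuousAt.continuousWithinAt)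
    (fun u hu => (hB u (Ico_subset_Icc_self hu)).hasDerivWithinAt)
    (fun u hu => hbound u (Ico_subset_Icc_self hu)) (right_mem_Icc.2 hst)

theorem exists_tendsto_of_norm_deriv_le_rpow [CompleteSpace E] {f f' : ℝ → E} {K σ : ℝ}
    (hσ : 0 < σ) (hf : ∀ t, HasDerivAt f (f' t) t)
    (hbound : ∀ᶠ t in atTop, ‖f' t‖ ≤ K * t ^ (-σ - 1)) :
    ∃ L, Tendsto f atTop (𝓝 L) ∧ ∀ᶠ t in atTop, ‖f t - L‖ ≤ K / σ * t ^ (-σ) := by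
  obtain ⟨T, hT⟩ := eventually_atTop.1 (hbound.and (eventually_gt_atTop 0))
  have hT₀ : 0 < T := (hT T le_rfl).2
  have hK : 0 ≤ K :=
    nonneg_of_mul_nonneg_left ((norm_nonneg _).trans (hT T le_rfl).1) (Real.rpow_pos_of_pos hT₀ _)
  have hinc : ∀ s t, T ≤ s → s ≤ t → ‖f t - f s‖ ≤ K / σ * s ^ (-σ) := fun s t hs hst => by
    have hs₀ : 0 < s := hT₀.trans_le hs
    calc ‖f t - f s‖ ≤ K / σ * (s ^ (-σ) - t ^ (-σ)) :=
          norm_sub_le_of_norm_deriv_le_rpow hσ.ne' hs₀ hst (fun u _ => hf u)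
            (fun u hu => (hT u (hs.trans hu.1)).1)
      _ ≤ K / σ * s ^ (-σ) := mul_le_mul_of_nonneg_left
          (sub_le_self _ (Real.rpow_nonneg (hs₀.le.trans hst) _)) (div_nonneg hK hσ.le)
  have htail : Tendsto (fun t => K / σ * t ^ (-σ)) atTop (𝓝 0) := by
    simpa using (tendsto_rpow_neg_atTop hσ).const_mul (K / σ)
  have hcauchy : CauchySeq f := Metric.cauchySeq_iff'.2 fun ε hε => by
    obtain ⟨N, hN, hTN⟩ := ((htail.eventually (gt_mem_nhds hε)).and (eventually_ge_atTop T)).exists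
    exact ⟨N, fun t ht => (dist_eq_norm _ _).trans_lt ((hinc N t hTN ht).trans_lt hN)⟩
  obtain ⟨L, hL⟩ := cauchySeq_tendsto_of_complete hcauchy
  refine ⟨L, hL, eventually_atTop.2 ⟨T, fun t ht => ?_⟩⟩
  refine le_of_tendsto ((hL.const_sub (f t)).norm) (eventually_atTop.2 ⟨t, fun u hu => ?_⟩)
  rw [norm_sub_rev]
  exact hinc t u ht hu

end Decay

section Escape

variable {E : Type*} [NormedAddCommGroup E] [InnerProductSpace ℝ E]

theorem exists_pos_eventually_mul_le_norm_of_virial_ge {x v a : ℝ → E} {m : ℝ} (hm : 0 < m)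
    (hx : ∀ t, HasDerivAt x (v t) t) (hv : ∀ t, HasDerivAt v (a t) t)
    (hvirial : ∀ᶠ t in atTop, m ≤ ‖v t‖ ^ 2 + ⟪x t, a t⟫) :
    ∃ c > 0, ∀ᶠ t in atTop, c * t ≤ ‖x t‖ := by
  have hinner : ∀ t, HasDerivAt (fun t => ⟪x t, v t⟫) (‖v t‖ ^ 2 + ⟪x t, a t⟫) t := fun t => by
    simpa only [real_inner_self_eq_norm_sq, add_comm] using (hx t).inner ℝ (hv t)
  obtain ⟨α, hα⟩ := exists_eventually_add_le_of_deriv_le hinner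
    (fun t => (hasDerivAt_id' t).const_mul m) (by simpa using hvirial)
  have hquad : ∀ t, HasDerivAt (fun t => m * t ^ 2 + 2 * α * t) (2 * (m * t + α)) t := fun t =>
    (((hasDerivAt_pow 2 t).const_mul m).fun_add ((hasDerivAt_id' t).const_mul (2 * α))).congr_deriv
      (by push_cast; ring)
  obtain ⟨β, hβ⟩ := exists_eventually_add_le_of_deriv_le (fun t => (hx t).norm_sq) hquad
    (hα.mono fun t ht => by simpa using ht)
  have hpoly : Tendsto (fun t : ℝ => t * (m / 2 * t + 2 * α) + β) atTop atTop :=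
    tendsto_atTop_add_const_right _ β (tendsto_id.atTop_mul_atTop₀
      (tendsto_atTop_add_const_right _ _ (tendsto_id.const_mul_atTop (by positivity))))
  refine ⟨√(m / 2), by positivity, ?_⟩
  filter_upwards [hβ, hpoly.eventually_ge_atTop 0, eventually_ge_atTop 0] with t hβt hpt ht
  have hsq : (√(m / 2) * t) ^ 2 ≤ ‖x t‖ ^ 2 := by
    rw [mul_pow, Real.sq_sqrt (by positivity)]
    nlinarith
  exact le_of_sq_le_sq hsq (norm_nonneg _)

end Escape

section ShortRange

variable {E : Type*} [NormedAddCommGroup E]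

theorem tendsto_zero_of_abs_le_mul_one_add_norm_rpow {α : Type*} {l : Filter α} {x : α → E}
    {u : α → ℝ} {C ρ : ℝ} (hρ : 0 < ρ) (hx : Tendsto (fun a => ‖x a‖) l atTop)
    (hu : ∀ a, |u a| ≤ C * (1 + ‖x a‖) ^ (-ρ)) : Tendsto u l (𝓝 0) :=
  squeeze_zero_norm hu <| by
    simpa using ((tendsto_rpow_neg_atTop hρ).comp (tendsto_atTop_add_const_left _ 1 hx)).const_mul C

theorem eventually_norm_le_mul_rpow_of_mul_le_norm {F : Type*} [NormedAddCommGroup F]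
    {x : ℝ → E} {v : ℝ → F} {C c r : ℝ} (hC : 0 ≤ C) (hc : 0 < c) (hr : r ≤ 0)
    (hv : ∀ t, ‖v t‖ ≤ C * (1 + ‖x t‖) ^ r) (hx : ∀ᶠ t in atTop, c * t ≤ ‖x t‖) :
    ∀ᶠ t in atTop, ‖v t‖ ≤ C * c ^ r * t ^ r := by
  filter_upwards [hx, eventually_gt_atTop 0] with t hxt ht
  calc ‖v t‖ ≤ C * (1 + ‖x t‖) ^ r := hv t
    _ ≤ C * (c * t) ^ r :=
        mul_le_mul_of_nonneg_left (Real.rpow_le_rpow_of_nonpos (by positivity) (by linarith) hr) hC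
    _ = C * c ^ r * t ^ r := by rw [Real.mul_rpow hc.le ht.le, mul_assoc]

theorem abs_inner_le_mul_one_add_norm_rpow [InnerProductSpace ℝ E] {y v : E} {C ρ : ℝ}
    (hv : ‖v‖ ≤ C * (1 + ‖y‖) ^ (-ρ - 1)) : |⟪y, v⟫| ≤ C * (1 + ‖y‖) ^ (-ρ) :=
  calc |⟪y, v⟫| ≤ ‖y‖ * ‖v‖ := abs_real_inner_le_norm y v
    _ ≤ (1 + ‖y‖) * (C * (1 + ‖y‖) ^ (-ρ - 1)) :=
        mul_le_mul (by linarith) hv (norm_nonneg _) (by positivity)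
    _ = C * (1 + ‖y‖) ^ (-ρ) := by
        rw [Real.rpow_sub_one (by positivity)]
        field_simp

end ShortRange

theorem escaping_trajectory_has_asymptotics_general {n : ℕ}
    (V : EuclideanSpace ℝ (Fin n) → ℝ)
    (ρ₀ C : ℝ) (hρ₀ : 1 < ρ₀)
    (hshort : ∀ x : EuclideanSpace ℝ (Fin n),
      |V x| ≤ C * (1 + ‖x‖) ^ (-ρ₀) ∧ ‖gradient V x‖ ≤ C * (1 + ‖x‖) ^ (-ρ₀ - 1))
    (x ξ : ℝ → EuclideanSpace ℝ (Fin n))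
    (hx : ∀ t, HasDerivAt x (ξ t) t)
    (hξ : ∀ t, HasDerivAt ξ (-(gradient V (x t))) t)
    (En : ℝ) (hEn : 0 < En)
    (hE : ∀ t, ‖ξ t‖ ^ 2 / 2 + V (x t) = En)
    (hesc : Tendsto (fun t => ‖x t‖) atTop atTop) :
    ∃ ξinf xinf : EuclideanSpace ℝ (Fin n),
      ‖ξinf‖ ^ 2 = 2 * En ∧
      Tendsto ξ atTop (nhds ξinf) ∧
      Tendsto (fun t => x t - t • ξinf - xinf) atTop (nhds 0) := by
  have hρ : 0 < ρ₀ := by linarith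
  have hC : 0 ≤ C := by simpa using (abs_nonneg _).trans (hshort 0).1
  have hkinetic : Tendsto (fun t => ‖ξ t‖ ^ 2) atTop (𝓝 (2 * En)) := by
    have hV := tendsto_zero_of_abs_le_mul_one_add_norm_rpow hρ hesc fun t => (hshort (x t)).1
    simpa [fun t => show ‖ξ t‖ ^ 2 = 2 * En - 2 * V (x t) by linarith [hE t]] using
      (hV.const_mul 2).const_sub (2 * En)
  have hvirial : Tendsto (fun t => ‖ξ t‖ ^ 2 + ⟪x t, -gradient V (x t)⟫) atTop (𝓝 (2 * En)) := by
    simpa only [add_zero] using hkinetic.add <|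
      tendsto_zero_of_abs_le_mul_one_add_norm_rpow hρ hesc fun t =>
        abs_inner_le_mul_one_add_norm_rpow ((norm_neg _).trans_le (hshort (x t)).2)
  obtain ⟨c, hc, hgrow⟩ := exists_pos_eventually_mul_le_norm_of_virial_ge hEn hx hξ
    (hvirial.eventually_const_le (by linarith))
  have hforce := eventually_norm_le_mul_rpow_of_mul_le_norm (v := fun t => -gradient V (x t))
    (r := -ρ₀ - 1) hC hc (by linarith) (fun t => (norm_neg _).trans_le (hshort (x t)).2) hgrow
  obtain ⟨ξinf, hξlim, hξrate⟩ := exists_tendsto_of_norm_deriv_le_rpow hρ hξ hforce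
  obtain ⟨xinf, hxlim, -⟩ := exists_tendsto_of_norm_deriv_le_rpow (f := fun t => x t - t • ξinf)
    (by linarith : 0 < ρ₀ - 1) (fun t => (hx t).sub ((hasDerivAt_id' t).smul_const ξinf))
    (hξrate.mono fun t ht => by rwa [one_smul, show -(ρ₀ - 1) - 1 = -ρ₀ by ring])
  exact ⟨ξinf, xinf, tendsto_nhds_unique (hξlim.norm.pow 2) hkinetic, hξlim,
    tendsto_sub_nhds_zero_iff.2 hxlim⟩

/-- An escaping Hamiltonian trajectory of p = |ξ|²/2 + V with V short range and
energy E > 0 has asymptotic momentum ξinf (with |ξinf|² = 2E) and asymptotic position xinf: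
x(t) - tξinf - xinf → 0 and ξ(t) → ξinf as t → +∞. -/
theorem escaping_trajectory_has_asymptotics {n : ℕ}
    (V : EuclideanSpace ℝ (Fin n) → ℝ) (hV : ContDiff ℝ (⊤ : ℕ∞) V)
    (ρ₀ C : ℝ) (hρ₀ : 1 < ρ₀)
    (hshort : ∀ x : EuclideanSpace ℝ (Fin n),
      |V x| ≤ C * (1 + ‖x‖) ^ (-ρ₀) ∧ ‖gradient V x‖ ≤ C * (1 + ‖x‖) ^ (-ρ₀ - 1))
    (x ξ : ℝ → EuclideanSpace ℝ (Fin n))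
    (hx : ∀ t, HasDerivAt x (ξ t) t)
    (hξ : ∀ t, HasDerivAt ξ (-(gradient V (x t))) t)
    (En : ℝ) (hEn : 0 < En)
    (hE : ∀ t, ‖ξ t‖ ^ 2 / 2 + V (x t) = En)
    (hesc : Tendsto (fun t => ‖x t‖) atTop atTop) :
    ∃ ξinf xinf : EuclideanSpace ℝ (Fin n),
      ‖ξinf‖ ^ 2 = 2 * En ∧
      Tendsto ξ atTop (nhds ξinf) ∧
      Tendsto (fun t => x t - t • ξinf - xinf) atTop (nhds 0) :=
  escaping_trajectory_has_asymptotics_general V ρ₀ C hρ₀ hshort x ξ hx hξ En hEn hE hesc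
end
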